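/- Let p be a prime, let k ∈ ℤ_p be nonzero, and assume S = ℤ_p[z]/(z² − k) is the maximal order in K = ℚ_p[z]/(z² − k), i.e., S is identified with the integral closure of ℤ_p in K. Let f be an integer-matrix binary cubic form with coefficients in ℤ_p and reduced discriminant 4k. Then the stabilizer of f in SL₂(ℚ_p) equals its stabilizer in SL₂(ℤ_p): every γ ∈ SL₂(ℚ_p) with γ·f = f has all entries in ℤ_p. -/

import Mathlib

/-!
STATEMENT 9: Let p be a prime, k ∈ ℤ_p nonzero, and assume S = ℤ_p[z]/(z² − k) is the
maximal order in K = ℚ_p[z]/(z² − k) (the natural map S → K identifies S with the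
integral closure of ℤ_p in K).  If f is an integer-matrix binary cubic form with
ℤ_p-coefficients and reduced discriminant 4k, then the stabilizer of f in SL₂(ℚ_p)
equals its stabilizer in SL₂(ℤ_p): every γ ∈ SL₂(ℚ_p) fixing f has all entries in ℤ_p.
-/

open Matrix MatrixGroups

/-- An (integer-matrix) binary cubic form over `R`: the quadruple `(a,b,c,d)` stands for
`f(x,y) = a·x³ + 3b·x²y + 3c·xy² + d·y³`. -/
abbrev BCF (R : Type*) := R × R × R × R

/-- The reduced discriminant `disc(f) = a²d² − 3b²c² − 6abcd + 4ac³ + 4b³d` of the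
integer-matrix binary cubic form `(a,b,c,d)`. -/
def bcfDisc {R : Type*} [CommRing R] (f : BCF R) : R :=
  f.1 ^ 2 * f.2.2.2 ^ 2 - 3 * f.2.1 ^ 2 * f.2.2.1 ^ 2
    - 6 * f.1 * f.2.1 * f.2.2.1 * f.2.2.2 + 4 * f.1 * f.2.2.1 ^ 3 + 4 * f.2.1 ^ 3 * f.2.2.2

/-- The value `f(x,y)` of the integer-matrix binary cubic form `f = (a,b,c,d)`. -/
def bcfVal {R : Type*} [CommRing R] (f : BCF R) (x y : R) : R :=
  f.1 * x ^ 3 + 3 * f.2.1 * x ^ 2 * y + 3 * f.2.2.1 * x * y ^ 2 + f.2.2.2 * y ^ 3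

/-- The action of a 2×2 matrix `γ = ((p,q),(r,s))` on integer-matrix binary cubic forms
by linear change of variable, `(γ·f)(x,y) = f(px+qy, rx+sy)`, written in coordinates. -/
def bcfAct {R : Type*} [CommRing R] (γ : Matrix (Fin 2) (Fin 2) R) (f : BCF R) : BCF R :=
  (f.1 * γ 0 0 ^ 3 + 3 * f.2.1 * γ 0 0 ^ 2 * γ 1 0 + 3 * f.2.2.1 * γ 0 0 * γ 1 0 ^ 2
     + f.2.2.2 * γ 1 0 ^ 3,
   f.1 * γ 0 0 ^ 2 * γ 0 1 + f.2.1 * (γ 0 0 ^ 2 * γ 1 1 + 2 * γ 0 0 * γ 0 1 * γ 1 0)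
     + f.2.2.1 * (2 * γ 0 0 * γ 1 0 * γ 1 1 + γ 0 1 * γ 1 0 ^ 2) + f.2.2.2 * γ 1 0 ^ 2 * γ 1 1,
   f.1 * γ 0 0 * γ 0 1 ^ 2 + f.2.1 * (2 * γ 0 0 * γ 0 1 * γ 1 1 + γ 0 1 ^ 2 * γ 1 0)
     + f.2.2.1 * (γ 0 0 * γ 1 1 ^ 2 + 2 * γ 0 1 * γ 1 0 * γ 1 1) + f.2.2.2 * γ 1 0 * γ 1 1 ^ 2,
   f.1 * γ 0 1 ^ 3 + 3 * f.2.1 * γ 0 1 ^ 2 * γ 1 1 + 3 * f.2.2.1 * γ 0 1 * γ 1 1 ^ 2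
     + f.2.2.2 * γ 1 1 ^ 3)

/-- The action is by substitution: `(γ·f)(x,y) = f(px+qy, rx+sy)`. -/
theorem bcfAct_val {R : Type*} [CommRing R] (γ : Matrix (Fin 2) (Fin 2) R) (f : BCF R)
    (x y : R) : bcfVal (bcfAct γ f) x y
      = bcfVal f (γ 0 0 * x + γ 0 1 * y) (γ 1 0 * x + γ 1 1 * y) := by
  simp only [bcfAct, bcfVal]; ring

theorem bcfAct_one {R : Type*} [CommRing R] (f : BCF R) : bcfAct (1 : Matrix (Fin 2) (Fin 2) R) f = f := by
  obtain ⟨a, b, c, d⟩ := f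
  simp [bcfAct, Matrix.one_apply]

theorem bcfAct_mul {R : Type*} [CommRing R] (g h : Matrix (Fin 2) (Fin 2) R) (f : BCF R) :
    bcfAct (g * h) f = bcfAct h (bcfAct g f) := by
  obtain ⟨a, b, c, d⟩ := f
  simp only [bcfAct, Matrix.mul_apply, Fin.sum_univ_two, Prod.mk.injEq]
  refine ⟨by ring, by ring, by ring, by ring⟩

noncomputable section

open Polynomial

variable (p : ℕ) [Fact p.Prime] (k : ℤ_[p])

/-- The order `S = ℤ_p[z]/(z² − k)`. -/
abbrev Sord := AdjoinRoot (Polynomial.X ^ 2 - Polynomial.C k : Polynomial ℤ_[p])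

/-- The quadratic étale algebra `K = ℚ_p[z]/(z² − k)`. -/
abbrev Kalg := AdjoinRoot (Polynomial.X ^ 2 - Polynomial.C (k : ℚ_[p]) : Polynomial ℚ_[p])

/-- The natural map `S → K`, sending `z` to `z` and acting on constants via the
inclusion `ℤ_p → ℚ_p`. -/
def iota : Sord p k →+* Kalg p k :=
  AdjoinRoot.lift (algebraMap ℤ_[p] (Kalg p k)) (AdjoinRoot.root _) (by
    have h := AdjoinRoot.eval₂_root (X ^ 2 - C (k : ℚ_[p]) : Polynomial ℚ_[p])
    simp only [eval₂_sub, eval₂_pow, eval₂_X, eval₂_C] at h ⊢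
    rw [IsScalarTower.algebraMap_apply ℤ_[p] ℚ_[p], AdjoinRoot.algebraMap_eq]
    exact h)

/-- Coefficientwise inclusion of binary cubic forms over `ℤ_p` into forms over `ℚ_p`. -/
def mapC : BCF ℤ_[p] → BCF ℚ_[p] := fun f =>
  ((f.1 : ℚ_[p]), (f.2.1 : ℚ_[p]), (f.2.2.1 : ℚ_[p]), (f.2.2.2 : ℚ_[p]))


/-!
The Hessian `H` of `f` is a quadratic covariant, so `γ` commutes with the traceless matrix `N`
built from `H`, whose square is `disc f = 4k`. Hence `γ = x + yN` lies in `ℚ_p[N] ≅ K`; let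
`ε = x + 2y√k` be the corresponding element. The cubic covariant `G` satisfies the syzygy
`G² - 4k (3f)² = 36 H³`, and `γ` multiplies `G + 6f√k` by the cube of the conjugate of `ε`;
evaluating at a point where `H ≠ 0` gives `ε³ = 1`. So `ε` is integral over `ℤ_p`, lies in `S`
by maximality, and `x, 2y ∈ ℤ_p`. The entries of `γ` are then integral because `(bc - ad)/2`
is: its square is `k + (b² - ac)(c² - bd)`.
-/

section Covariants

variable {R : Type*} [CommRing R]

/-- `2 J S`, where `S` is the Gram matrix of the Hessian `bcfHess f` and `J = !![0, -1; 1, 0]`. -/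
def bcfHessMat : BCF R → Matrix (Fin 2) (Fin 2) R
  | (a, b, c, d) => !![a * d - b * c, 2 * (b * d - c ^ 2); 2 * (b ^ 2 - a * c), b * c - a * d]

def bcfHess : BCF R → R → R → R
  | (a, b, c, d), x, y =>
    (b ^ 2 - a * c) * x ^ 2 + (b * c - a * d) * x * y + (c ^ 2 - b * d) * y ^ 2

/-- The Jacobian `f_x H_y - f_y H_x` of `f` and its Hessian `H`. -/
def bcfCov : BCF R → R → R → R
  | (a, b, c, d), x, y =>
    (3 * a * x ^ 2 + 6 * b * x * y + 3 * c * y ^ 2)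
        * ((b * c - a * d) * x + 2 * (c ^ 2 - b * d) * y)
      - (3 * b * x ^ 2 + 6 * c * x * y + 3 * d * y ^ 2)
        * (2 * (b ^ 2 - a * c) * x + (b * c - a * d) * y)

theorem bcfHessMat_mul_self (f : BCF R) : bcfHessMat f * bcfHessMat f = bcfDisc f • 1 := by
  obtain ⟨a, b, c, d⟩ := f
  ext i j
  fin_cases i <;> fin_cases j <;>
    simp [bcfHessMat, bcfDisc, Matrix.mul_apply, Fin.sum_univ_two] <;> ring

theorem trace_bcfHessMat (f : BCF R) : (bcfHessMat f).trace = 0 := by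
  obtain ⟨a, b, c, d⟩ := f
  simp [bcfHessMat, Matrix.trace_fin_two]

theorem bcfHessMat_bcfAct (γ : Matrix (Fin 2) (Fin 2) R) (f : BCF R) :
    bcfHessMat (bcfAct γ f) = γ.det ^ 2 • (γ.adjugate * bcfHessMat f * γ) := by
  obtain ⟨a, b, c, d⟩ := f
  rw [Matrix.adjugate_fin_two, Matrix.det_fin_two]
  ext i j
  fin_cases i <;> fin_cases j <;>
    simp [bcfHessMat, bcfAct, Fin.sum_univ_two, Matrix.vecMul, dotProduct] <;> ring

theorem bcfCov_bcfAct (γ : Matrix (Fin 2) (Fin 2) R) (f : BCF R) (x y : R) :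
    bcfCov (bcfAct γ f) x y
      = γ.det ^ 3 * bcfCov f (γ 0 0 * x + γ 0 1 * y) (γ 1 0 * x + γ 1 1 * y) := by
  obtain ⟨a, b, c, d⟩ := f
  rw [Matrix.det_fin_two]
  simp only [bcfCov, bcfAct]
  ring

theorem bcfCov_syzygy (f : BCF R) (x y : R) :
    bcfCov f x y ^ 2 - bcfDisc f * (3 * bcfVal f x y) ^ 2 = 36 * bcfHess f x y ^ 3 := by
  obtain ⟨a, b, c, d⟩ := f
  simp only [bcfCov, bcfDisc, bcfVal, bcfHess]
  ring

/- The coefficients are the components `U, W` of `(x + y√δ)³ = U + W√δ`, where `δ = disc f`: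
this identity and the next say that `x + y • bcfHessMat f` multiplies `G + 3f√δ`, with
`G = bcfCov f`, by `(x - y√δ)³ = U - W√δ`. -/
theorem bcfVal_comp_add_smul_bcfHessMat (f : BCF R) {γ : Matrix (Fin 2) (Fin 2) R} {x y : R}
    (hγ : γ = x • 1 + y • bcfHessMat f) (v w : R) :
    3 * bcfVal f (γ 0 0 * v + γ 0 1 * w) (γ 1 0 * v + γ 1 1 * w)
      = 3 * (x ^ 3 + 3 * bcfDisc f * x * y ^ 2) * bcfVal f v w
        - (3 * x ^ 2 * y + bcfDisc f * y ^ 3) * bcfCov f v w := by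
  subst hγ
  obtain ⟨a, b, c, d⟩ := f
  simp [bcfHessMat, bcfVal, bcfCov, bcfDisc]
  ring

theorem bcfCov_comp_add_smul_bcfHessMat (f : BCF R) {γ : Matrix (Fin 2) (Fin 2) R} {x y : R}
    (hγ : γ = x • 1 + y • bcfHessMat f) (v w : R) :
    bcfCov f (γ 0 0 * v + γ 0 1 * w) (γ 1 0 * v + γ 1 1 * w)
      = (x ^ 3 + 3 * bcfDisc f * x * y ^ 2) * bcfCov f v w
        - 3 * bcfDisc f * (3 * x ^ 2 * y + bcfDisc f * y ^ 3) * bcfVal f v w := by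
  subst hγ
  obtain ⟨a, b, c, d⟩ := f
  simp [bcfHessMat, bcfVal, bcfCov, bcfDisc]
  ring

theorem commute_bcfHessMat_of_bcfAct_eq {γ : Matrix (Fin 2) (Fin 2) R} {f : BCF R}
    (hdet : γ.det = 1) (hfix : bcfAct γ f = f) : Commute γ (bcfHessMat f) := by
  have h := bcfHessMat_bcfAct γ f
  rw [hfix, hdet, one_pow, one_smul] at h
  calc γ * bcfHessMat f = γ * γ.adjugate * bcfHessMat f * γ := by
        conv_lhs => rw [h]
        simp only [Matrix.mul_assoc]
    _ = bcfHessMat f * γ := by rw [Matrix.mul_adjugate, hdet, one_smul, Matrix.one_mul]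

theorem exists_bcfHess_ne_zero {f : BCF R} (hf : bcfDisc f ≠ 0) :
    ∃ x y, bcfHess f x y ≠ 0 := by
  obtain ⟨a, b, c, d⟩ := f
  by_cases hA : b ^ 2 - a * c = 0
  · by_cases hC : c ^ 2 - b * d = 0
    · refine ⟨1, 1, fun h => hf ?_⟩
      simp only [bcfHess, bcfDisc] at h ⊢
      linear_combination (b * c - a * d) * (h - hA - hC) - 4 * (c ^ 2 - b * d) * hA
    · exact ⟨0, 1, by simpa [bcfHess] using hC⟩
  · exact ⟨1, 0, by simpa [bcfHess] using hA⟩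

theorem two_dvd_of_four_dvd_bcfDisc [IsDomain R] [IsIntegrallyClosed R] {a b c d : R}
    (h : 4 ∣ bcfDisc (a, b, c, d)) : 2 ∣ b * c - a * d := by
  rw [← IsIntegrallyClosed.pow_dvd_pow_iff two_ne_zero]
  have hsq : (b * c - a * d) ^ 2
      = bcfDisc (a, b, c, d) + 4 * ((b ^ 2 - a * c) * (c ^ 2 - b * d)) := by
    simp only [bcfDisc]
    ring
  rw [hsq, show (2 : R) ^ 2 = 4 by norm_num]
  exact dvd_add h (dvd_mul_right 4 _)

end Covariants

section Field

variable {F : Type*} [Field F]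

theorem Matrix.exists_eq_smul_one_add_smul_of_commute [NeZero (2 : F)]
    {γ N : Matrix (Fin 2) (Fin 2) F} {δ : F} (hδ : δ ≠ 0) (htr : N.trace = 0)
    (hN : N * N = δ • 1) (hγ : Commute γ N) : ∃ x y : F, γ = x • 1 + y • N := by
  -- `1` and `N` are orthogonal for the trace form, and `(N * N).trace = 2δ`.
  refine ⟨γ.trace / 2, (γ * N).trace / (2 * δ), ?_⟩
  have hc : ∀ i j, (γ * N) i j = (N * γ) i j := fun i j => by rw [hγ.eq]
  have hN00 : (N * N) 0 0 = δ := by simp [hN]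
  simp only [Matrix.mul_apply, Fin.sum_univ_two] at hc hN00
  have h00 := hc 0 0
  have h01 := hc 0 1
  have h10 := hc 1 0
  rw [Matrix.trace_fin_two] at htr
  ext i j
  fin_cases i <;> fin_cases j <;> simp [Matrix.trace_fin_two, Matrix.mul_apply] <;> field_simp
  · linear_combination (γ 1 1 - γ 0 0) * hN00 + N 1 0 * h01 + N 0 0 * h00
      - (N 1 0 * γ 0 1 + N 0 0 * γ 1 1) * htr
  · linear_combination (-2 * γ 0 1) * hN00 - N 0 0 * h01 + N 0 1 * h00
      + (N 0 0 * γ 0 1 - N 0 1 * γ 1 1) * htr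
  · linear_combination (-2 * γ 1 0) * hN00 + N 0 0 * h10 - N 1 0 * h00
      + (N 0 0 * γ 1 0 - N 1 0 * γ 1 1) * htr
  · linear_combination (γ 0 0 - γ 1 1) * hN00 - N 1 0 * h01 - N 0 0 * h00
      - (γ 0 0 * N 0 0 + γ 1 0 * N 0 1 + γ 1 1 * N 1 1 - N 0 0 * γ 1 1) * htr

/- The conclusion is `(x + y√δ)³ = 1`, in components, where `δ = disc f`. -/
theorem cube_components_of_bcfAct_eq [CharZero F] {f : BCF F} {γ : Matrix (Fin 2) (Fin 2) F}
    {x y : F} (hf : bcfDisc f ≠ 0) (hdet : γ.det = 1) (hfix : bcfAct γ f = f)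
    (hγ : γ = x • 1 + y • bcfHessMat f) :
    x ^ 3 + 3 * bcfDisc f * x * y ^ 2 = 1 ∧ 3 * x ^ 2 * y + bcfDisc f * y ^ 3 = 0 := by
  obtain ⟨v, w, hH⟩ := exists_bcfHess_ne_zero hf
  have hval := bcfVal_comp_add_smul_bcfHessMat f hγ v w
  rw [← bcfAct_val, hfix] at hval
  have hcov_inv := bcfCov_bcfAct γ f v w
  rw [hfix, hdet, one_pow, one_mul] at hcov_inv
  have hcov := bcfCov_comp_add_smul_bcfHessMat f hγ v w
  rw [← hcov_inv] at hcov
  have syz := bcfCov_syzygy f v w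
  set U := x ^ 3 + 3 * bcfDisc f * x * y ^ 2
  set W := 3 * x ^ 2 * y + bcfDisc f * y ^ 3
  have h36 : 36 * bcfHess f v w ^ 3 ≠ 0 := mul_ne_zero (by norm_num) (pow_ne_zero 3 hH)
  -- `36 H³` is the norm of `G + 3f√δ`, see `bcfCov_syzygy`.
  constructor
  · have : (U - 1) * (36 * bcfHess f v w ^ 3) = 0 := by
      linear_combination (1 - U) * syz - bcfCov f v w * hcov
        + bcfDisc f * (3 * bcfVal f v w) * hval
    exact sub_eq_zero.mp ((mul_eq_zero.mp this).resolve_right h36)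
  · have : W * (36 * bcfHess f v w ^ 3) = 0 := by
      linear_combination -W * syz + bcfCov f v w * hval - 3 * bcfVal f v w * hcov
    exact (mul_eq_zero.mp this).resolve_right h36

end Field

namespace AdjoinRoot

variable {R : Type*} [CommRing R] {k : R}

theorem root_sq_eq_of : root (X ^ 2 - C k) ^ 2 = of _ k := by
  have h := eval₂_root (X ^ 2 - C k)
  simp only [eval₂_sub, eval₂_pow, eval₂_X, eval₂_C] at h
  linear_combination h

theorem exists_eq_of_add_of_mul_root [Nontrivial R] (t : AdjoinRoot (X ^ 2 - C k)) :
    ∃ u v : R, t = of _ u + of _ v * root _ := by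
  have hmonic := monic_X_pow_sub_C k two_ne_zero
  obtain ⟨g, rfl⟩ := mk_surjective t
  have hdeg : (g %ₘ (X ^ 2 - C k)).natDegree ≤ 1 := by
    have := natDegree_modByMonic_lt g hmonic fun h => by simpa using congrArg natDegree h
    rw [natDegree_X_pow_sub_C] at this
    omega
  refine ⟨(g %ₘ (X ^ 2 - C k)).coeff 0, (g %ₘ (X ^ 2 - C k)).coeff 1, ?_⟩
  rw [← mk_leftInverse hmonic (mk _ g), modByMonicHom_mk, eq_X_add_C_of_natDegree_le_one hdeg,
    map_add, map_mul, mk_C, mk_C, mk_X, add_comm]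
  simp

theorem of_add_of_mul_root_eq_zero {u v : R} (h : of (X ^ 2 - C k) u + of _ v * root _ = 0) :
    u = 0 ∧ v = 0 := by
  nontriviality R
  have hmk : mk (X ^ 2 - C k) (C v * X + C u) = 0 := by
    rw [map_add, map_mul, mk_C, mk_C, mk_X, add_comm, ← h]
  have hzero : C v * X + C u = 0 := by
    by_contra hne
    refine (monic_X_pow_sub_C k two_ne_zero).not_dvd_of_degree_lt hne ?_ (mk_eq_zero.mp hmk)
    rw [degree_X_pow_sub_C two_pos]
    exact degree_linear_le.trans_lt (by norm_num)
  exact ⟨by simpa using congrArg (coeff · 0) hzero, by simpa using congrArg (coeff · 1) hzero⟩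

theorem of_add_of_mul_root_pow_three (u v : R) :
    (of (X ^ 2 - C k) u + of _ v * root _) ^ 3
      = of _ (u ^ 3 + 3 * k * u * v ^ 2) + of _ (3 * u ^ 2 * v + k * v ^ 3) * root _ := by
  simp only [map_add, map_mul, map_pow, map_ofNat]
  linear_combination (3 * of (X ^ 2 - C k) u * of (X ^ 2 - C k) v ^ 2
    + of (X ^ 2 - C k) v ^ 3 * root (X ^ 2 - C k)) * root_sq_eq_of (k := k)

end AdjoinRoot

theorem iota_of (u : ℤ_[p]) : iota p k (AdjoinRoot.of _ u) = AdjoinRoot.of _ (u : ℚ_[p]) := by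
  rw [iota, AdjoinRoot.lift_of, IsScalarTower.algebraMap_apply ℤ_[p] ℚ_[p],
    AdjoinRoot.algebraMap_eq, PadicInt.algebraMap_apply]

theorem iota_root : iota p k (AdjoinRoot.root _) = AdjoinRoot.root _ :=
  AdjoinRoot.lift_root _

theorem bcfDisc_mapC (f : BCF ℤ_[p]) :
    bcfDisc (mapC p f) = ((bcfDisc f : ℤ_[p]) : ℚ_[p]) := by
  simp only [bcfDisc, mapC, ← PadicInt.algebraMap_apply, map_add, map_sub, map_mul, map_pow,
    map_ofNat]

theorem exists_coe_eq_of_isIntegral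
    (hmax : (iota p k).range = (integralClosure ℤ_[p] (Kalg p k)).toSubring) {u v : ℚ_[p]}
    (h : IsIntegral ℤ_[p]
      (AdjoinRoot.of _ u + AdjoinRoot.of _ v * AdjoinRoot.root (X ^ 2 - C (k : ℚ_[p])))) :
    ∃ m n : ℤ_[p], (m : ℚ_[p]) = u ∧ (n : ℚ_[p]) = v := by
  obtain ⟨t, ht⟩ :
      AdjoinRoot.of _ u + AdjoinRoot.of _ v * AdjoinRoot.root _ ∈ (iota p k).range := by
    rw [hmax]
    exact h
  obtain ⟨m, n, rfl⟩ := AdjoinRoot.exists_eq_of_add_of_mul_root t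
  rw [map_add, map_mul, iota_of, iota_of, iota_root] at ht
  obtain ⟨hm, hn⟩ := AdjoinRoot.of_add_of_mul_root_eq_zero (k := (k : ℚ_[p]))
    (u := (m : ℚ_[p]) - u) (v := (n : ℚ_[p]) - v)
    (by rw [map_sub, map_sub]; linear_combination ht)
  exact ⟨m, n, sub_eq_zero.mp hm, sub_eq_zero.mp hn⟩

theorem stabilizer_is_integral (hk : k ≠ 0)
    (hmax : (iota p k).range = (integralClosure ℤ_[p] (Kalg p k)).toSubring)
    (f : BCF ℤ_[p]) (hf : bcfDisc f = 4 * k)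
    (γ : Matrix.SpecialLinearGroup (Fin 2) ℚ_[p])
    (hγ : bcfAct (γ : Matrix (Fin 2) (Fin 2) ℚ_[p]) (mapC p f) = mapC p f) :
    ∀ i j : Fin 2, ∃ a : ℤ_[p], (a : ℚ_[p]) = (γ : Matrix (Fin 2) (Fin 2) ℚ_[p]) i j := by
  have hdisc : bcfDisc (mapC p f) = 4 * (k : ℚ_[p]) := by rw [bcfDisc_mapC, hf]; rfl
  have hδ : bcfDisc (mapC p f) ≠ 0 := by
    rw [hdisc]
    exact mul_ne_zero (by norm_num) (by simpa using hk)
  obtain ⟨x, y, hxy⟩ := Matrix.exists_eq_smul_one_add_smul_of_commute hδ (trace_bcfHessMat _)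
    (bcfHessMat_mul_self _) (commute_bcfHessMat_of_bcfAct_eq γ.2 hγ)
  obtain ⟨hU, hW⟩ := cube_components_of_bcfAct_eq hδ γ.2 hγ hxy
  rw [hdisc] at hU hW
  -- `bcfHessMat` squares to `4k`, so it plays the role of `2√k` in `K`.
  have hcube : (AdjoinRoot.of _ x + AdjoinRoot.of _ (2 * y)
      * AdjoinRoot.root (X ^ 2 - C (k : ℚ_[p]))) ^ 3 = 1 := by
    have h1 : x ^ 3 + 3 * (k : ℚ_[p]) * x * (2 * y) ^ 2 = 1 := by linear_combination hU
    have h0 : 3 * x ^ 2 * (2 * y) + (k : ℚ_[p]) * (2 * y) ^ 3 = 0 := by linear_combination 2 * hW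
    rw [AdjoinRoot.of_add_of_mul_root_pow_three, h1, h0, map_one, map_zero, zero_mul, add_zero]
  obtain ⟨m, n, hm, hn⟩ :=
    exists_coe_eq_of_isIntegral p k hmax (.of_pow three_pos (hcube ▸ isIntegral_one))
  obtain ⟨a, b, c, d⟩ := f
  obtain ⟨β, hβ⟩ := two_dvd_of_four_dvd_bcfDisc (hf ▸ dvd_mul_right 4 k)
  have hβ' : (b : ℚ_[p]) * c - a * d = 2 * β := by
    exact_mod_cast congrArg ((↑) : ℤ_[p] → ℚ_[p]) hβ
  rw [hxy]
  intro i j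
  fin_cases i <;> fin_cases j <;> simp only [bcfHessMat, mapC]
  · exact ⟨m - n * β, by simp [← hm]; linear_combination -β * hn + y * hβ'⟩
  · exact ⟨n * (b * d - c ^ 2), by simp; linear_combination (b * d - c ^ 2 : ℚ_[p]) * hn⟩
  · exact ⟨n * (b ^ 2 - a * c), by simp; linear_combination (b ^ 2 - a * c : ℚ_[p]) * hn⟩
  · exact ⟨m + n * β, by simp [← hm]; linear_combination β * hn - y * hβ'⟩
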